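/- arXiv:2107.13051 — 2 statements merged into one kernel-verified Lean document; each statement's English description precedes it below -/
import Mathlib

section
/- Let n > 2 and let G = C_n^+(1,2) be the directed circulant graph on Z/nZ with outgoing arcs 1 and 2 at every vertex. Then no primitive pseudo orbit on G of length l with 0 < l ≤ n has any self-intersection; that is, every vertex of G appears at most once among the origin vertices of the bonds of any such pseudo orbit. -/
/-!
Directed circulant graphs `C_n^+(a1,a2)` on the vertex set `ZMod n`:
circuits, periodic orbits, and pseudo orbits.

Each vertex `v` has exactly two outgoing bonds `(v, v + a1)` and `(v, v + a2)`
(taken mod `n`), where `0 < a1 < a2 < n`.  A bond is recorded by its origin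
vertex together with its arc (`a1` or `a2`).
-/

/-- The list of bonds (origin vertex, arc) of the walk starting at `v`
following the given list of arcs, on the circulant graph with vertex set `ZMod n`. -/
def bondsFrom (n : ℕ) : ZMod n → List ℕ → List (ZMod n × ℕ)
  | _, [] => []
  | v, a :: as => (v, a) :: bondsFrom n (v + (a : ZMod n)) as

/-- A circuit on the directed circulant graph `C_n^+(a1,a2)`: a starting vertex
together with a nonempty list of arcs, each equal to `a1` or `a2`, whose sum is
`0` modulo `n` (so that the walk returns to its starting vertex). -/
structure Circuit (n a1 a2 : ℕ) where
  start : ZMod n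
  arcs : List ℕ
  arcs_ne : arcs ≠ []
  arcs_mem : ∀ a ∈ arcs, a = a1 ∨ a = a2
  closed : ((arcs.sum : ℕ) : ZMod n) = 0

namespace Circuit

variable {n a1 a2 : ℕ}

/-- The length of a circuit: its number of bonds. -/
def len (c : Circuit n a1 a2) : ℕ := c.arcs.length

/-- The walk sum of a circuit: the sum of the arcs of its bonds. -/
def walkSum (c : Circuit n a1 a2) : ℕ := c.arcs.sum

/-- The list of bonds of a circuit, in order. -/
def bonds (c : Circuit n a1 a2) : List (ZMod n × ℕ) := bondsFrom n c.start c.arcs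

/-- The number of times a circuit passes the vertex `v`: the number of bonds
`(v₀, a)` of the circuit such that the residue of `v - v₀` in `{0, ..., n-1}`
is strictly smaller than the arc `a` (equivalently, than the residue of the
difference of the terminal and origin vertices of the bond). -/
def passCount (c : Circuit n a1 a2) (v : ZMod n) : ℕ :=
  c.bonds.countP fun b => decide ((v - b.1).val < b.2)

/-- The cyclic rotation of a circuit by `k` steps. -/
def rotate (c : Circuit n a1 a2) (k : ℕ) : Circuit n a1 a2 where
  start := c.start + (((c.arcs.take k).sum : ℕ) : ZMod n)
  arcs := c.arcs.rotate k
  arcs_ne := fun h => c.arcs_ne (by rwa [List.rotate_eq_nil_iff] at h)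
  arcs_mem := fun a ha => c.arcs_mem a (List.mem_rotate.mp ha)
  closed := by
    rw [show (c.arcs.rotate k).sum = c.arcs.sum from (c.arcs.rotate_perm k).sum_eq]
    exact c.closed

/-- A circuit is primitive if it does not consist of a strictly shorter circuit
repeated two or more times. -/
def IsPrimitive (c : Circuit n a1 a2) : Prop :=
  ¬ ∃ (w : List ℕ) (r : ℕ), 2 ≤ r ∧ ((w.sum : ℕ) : ZMod n) = 0 ∧
      c.arcs = (List.replicate r w).flatten

end Circuit

/-- Two circuits are related if the second is a cyclic rotation of the first. -/
def RotRel {n a1 a2 : ℕ} (c c' : Circuit n a1 a2) : Prop := ∃ k, c.rotate k = c'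

/-- A periodic orbit: an equivalence class of circuits under cyclic rotation. -/
def PeriodicOrbit (n a1 a2 : ℕ) : Type := Quot (@RotRel n a1 a2)

namespace PeriodicOrbit

variable {n a1 a2 : ℕ}

/-- The periodic orbit of a circuit. -/
def mk (c : Circuit n a1 a2) : PeriodicOrbit n a1 a2 := Quot.mk _ c

/-- The length of a periodic orbit: the length of any representative circuit. -/
def len : PeriodicOrbit n a1 a2 → ℕ :=
  Quot.lift Circuit.len (by
    rintro c c' ⟨k, rfl⟩
    simp [Circuit.len, Circuit.rotate])

/-- The walk sum of a periodic orbit: the walk sum of any representative circuit. -/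
def walkSum : PeriodicOrbit n a1 a2 → ℕ :=
  Quot.lift Circuit.walkSum (by
    rintro c c' ⟨k, rfl⟩
    exact ((c.arcs.rotate_perm k).sum_eq).symm)

/-- A periodic orbit is primitive if it is the class of a primitive circuit. -/
def IsPrimitive (γ : PeriodicOrbit n a1 a2) : Prop :=
  ∃ c : Circuit n a1 a2, mk c = γ ∧ c.IsPrimitive

/-- The multiset of bonds of a periodic orbit (computed from a representative;
this is independent of the representative since rotation permutes the bonds). -/
noncomputable def bonds (γ : PeriodicOrbit n a1 a2) : Multiset (ZMod n × ℕ) :=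
  ((Quot.exists_rep γ).choose.bonds : Multiset (ZMod n × ℕ))

/-- The number of times a periodic orbit passes a vertex (computed from a
representative; this is independent of the representative). -/
noncomputable def passCount (γ : PeriodicOrbit n a1 a2) (v : ZMod n) : ℕ :=
  (Quot.exists_rep γ).choose.passCount v

end PeriodicOrbit

/-- A pseudo orbit: a finite collection of periodic orbits. -/
abbrev PseudoOrbit (n a1 a2 : ℕ) := Multiset (PeriodicOrbit n a1 a2)

namespace PseudoOrbit

variable {n a1 a2 : ℕ}

/-- The length of a pseudo orbit: the sum of the lengths of its members. -/
def len (ps : PseudoOrbit n a1 a2) : ℕ := (ps.map PeriodicOrbit.len).sum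

/-- The walk sum of a pseudo orbit: the sum of the walk sums of its members. -/
def walkSum (ps : PseudoOrbit n a1 a2) : ℕ := (ps.map PeriodicOrbit.walkSum).sum

/-- A pseudo orbit is primitive if its members are primitive and pairwise distinct. -/
def IsPrimitive (ps : PseudoOrbit n a1 a2) : Prop :=
  (∀ γ ∈ ps, PeriodicOrbit.IsPrimitive γ) ∧ ps.Nodup

/-- The multiset of bonds of a pseudo orbit, counted with multiplicity over all
member periodic orbits. -/
noncomputable def bonds (ps : PseudoOrbit n a1 a2) : Multiset (ZMod n × ℕ) :=
  (ps.map PeriodicOrbit.bonds).sum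

/-- The multiset of origin vertices of the bonds of a pseudo orbit, with multiplicity. -/
noncomputable def origins (ps : PseudoOrbit n a1 a2) : Multiset (ZMod n) :=
  ps.bonds.map Prod.fst

/-- A pseudo orbit has no self-intersection if no vertex occurs more than once
among the origin vertices of its bonds. -/
def NoSelfIntersection (ps : PseudoOrbit n a1 a2) : Prop :=
  ∀ v : ZMod n, ps.origins.count v ≤ 1

/-- The number of vertices occurring exactly twice among the origin vertices of
the bonds of a pseudo orbit. -/
noncomputable def twoEncounterCount (ps : PseudoOrbit n a1 a2) : ℕ :=
  (ps.origins.toFinset.filter fun v => ps.origins.count v = 2).card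

/-- The pseudo orbit has exactly `N` self-intersections, each a 2-encounter of
length zero, and no other self-intersection: exactly `N` vertices occur exactly
twice among the origin vertices of its bonds, no vertex occurs more than twice,
and no bond occurs more than once. -/
def OnlyTwoEncounters (ps : PseudoOrbit n a1 a2) (N : ℕ) : Prop :=
  ps.bonds.Nodup ∧ (∀ v : ZMod n, ps.origins.count v ≤ 2) ∧ ps.twoEncounterCount = N

/-- The number of times a pseudo orbit passes a vertex: the total over its members. -/
noncomputable def passCount (ps : PseudoOrbit n a1 a2) (v : ZMod n) : ℕ :=
  (ps.map fun γ => γ.passCount v).sum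

end PseudoOrbit

/-!
On `C_n^+(1,2)` a circuit of length `L` has walk sum `W` with `L ≤ W ≤ 2L` and `n ∣ W`, so every
member of a pseudo orbit of length at most `n` has walk sum `n` or `2n`.  A circuit of walk sum `n`
winds once around the cycle and meets no vertex twice.  A circuit of walk sum `2n` and length at
most `n` takes `n` steps of `2`; it is primitive only for odd `n`, and then `2` is a unit mod `n`,
so its `n` vertices `v + 2i` are distinct.  Two distinct members have total length at most `n`, which forces
both to take `n / 2` steps of `2`; such an orbit is determined by any one of its vertices, so
distinct ones are vertex-disjoint.
-/

namespace List

theorem strictMonoOn_sum_take {l : List ℕ} (hl : ∀ a ∈ l, 0 < a) :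
    StrictMonoOn (fun i => (l.take i).sum) (Set.Iic l.length) := by
  intro i _ j hj hij
  have hsplit : l.take j = l.take i ++ (l.drop i).take (j - i) := by
    rw [← take_add, Nat.add_sub_cancel' hij.le]
  have hne : (l.drop i).take (j - i) ≠ [] := by
    simp only [ne_eq, take_eq_nil_iff, drop_eq_nil_iff, not_or]
    exact ⟨by omega, by simp only [Set.mem_Iic] at hj; omega⟩
  have hpos : 0 < ((l.drop i).take (j - i)).sum :=
    sum_pos _ (fun a ha => hl a (mem_of_mem_drop (mem_of_mem_take ha))) hne
  simp only [hsplit, sum_append]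
  omega

theorem injOn_natCast_sum_take {n : ℕ} {l : List ℕ} (hl : ∀ a ∈ l, 0 < a) (hsum : l.sum ≤ n) :
    Set.InjOn (fun i => (((l.take i).sum : ℕ) : ZMod n)) (Set.Iio l.length) := by
  have hmono := strictMonoOn_sum_take hl
  have hlt : ∀ i ∈ Set.Iio l.length, (l.take i).sum < n := fun i hi =>
    calc (l.take i).sum < (l.take l.length).sum :=
          hmono (Set.Iio_subset_Iic_self hi) (Set.mem_Iic.2 le_rfl) hi
      _ ≤ n := by rwa [take_length]
  intro i hi j hj hij
  have hmod := (ZMod.natCast_eq_natCast_iff' _ _ n).1 hij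
  rw [Nat.mod_eq_of_lt (hlt i hi), Nat.mod_eq_of_lt (hlt j hj)] at hmod
  exact hmono.injOn (Set.Iio_subset_Iic_self hi) (Set.Iio_subset_Iic_self hj) hmod

theorem eq_replicate_of_length_mul_le_sum {l : List ℕ} {b : ℕ} (hl : ∀ a ∈ l, a ≤ b)
    (h : l.length * b ≤ l.sum) : l = replicate l.length b := by
  induction l with
  | nil => rfl
  | cons a l ih =>
    have hl' : ∀ x ∈ l, x ≤ b := fun x hx => hl x (mem_cons_of_mem a hx)
    have ha := hl a mem_cons_self
    have hs : l.sum ≤ l.length * b := by simpa using sum_le_card_nsmul l b hl'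
    simp only [length_cons, sum_cons, add_mul, one_mul] at h
    rw [length_cons, replicate_succ, le_antisymm ha (by linarith), ← ih hl' (by linarith)]

end List

theorem map_fst_bondsFrom (n : ℕ) (v : ZMod n) (as : List ℕ) :
    (bondsFrom n v as).map Prod.fst
      = (List.range as.length).map fun i => v + (((as.take i).sum : ℕ) : ZMod n) := by
  induction as generalizing v with
  | nil => rfl
  | cons a as ih =>
    simp only [bondsFrom, List.map_cons, ih, List.length_cons, List.range_succ_eq_map,
      List.map_map]
    congr 1
    · simp
    · refine List.map_congr_left fun i _ => ?_
      simp [add_assoc]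

namespace Circuit

variable {n a1 a2 : ℕ}

theorem ext {c c' : Circuit n a1 a2} (hstart : c.start = c'.start) (harcs : c.arcs = c'.arcs) :
    c = c' := by
  cases c; cases c'; simp_all

def origins (c : Circuit n a1 a2) : List (ZMod n) := c.bonds.map Prod.fst

theorem origins_eq (c : Circuit n a1 a2) :
    c.origins = (List.range c.len).map fun i => c.start + (((c.arcs.take i).sum : ℕ) : ZMod n) :=
  map_fst_bondsFrom n c.start c.arcs

theorem nodup_origins_of_injOn (c : Circuit n a1 a2)
    (h : Set.InjOn (fun i => (((c.arcs.take i).sum : ℕ) : ZMod n)) (Set.Iio c.len)) :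
    c.origins.Nodup := by
  rw [origins_eq, List.nodup_map_iff_inj_on List.nodup_range]
  intro i hi j hj hij
  exact h (List.mem_range.1 hi) (List.mem_range.1 hj) (add_left_cancel hij)

theorem nodup_origins_of_walkSum_le (c : Circuit n a1 a2) (hpos : ∀ a ∈ c.arcs, 0 < a)
    (h : c.walkSum ≤ n) : c.origins.Nodup :=
  c.nodup_origins_of_injOn (List.injOn_natCast_sum_take hpos h)

theorem nodup_origins_of_arcs_eq_replicate (c : Circuit n a1 a2) {a : ℕ}
    (h : c.arcs = List.replicate c.len a) (ha : a.Coprime n) (hlen : c.len ≤ n) :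
    c.origins.Nodup := by
  refine c.nodup_origins_of_injOn fun i hi j hj hij => ?_
  simp only [Set.mem_Iio] at hi hj
  simp only [h, List.take_replicate, List.sum_replicate, smul_eq_mul, min_eq_left hi.le,
    min_eq_left hj.le, ZMod.natCast_eq_natCast_iff] at hij
  exact Nat.ModEq.eq_of_lt_of_lt (hij.cancel_right_of_coprime ha.symm) (by omega) (by omega)

theorem exists_rotate_start_eq (c : Circuit n a1 a2) {v : ZMod n} (hv : v ∈ c.origins) :
    ∃ k, (c.rotate k).start = v := by
  rw [origins_eq, List.mem_map] at hv
  obtain ⟨k, -, rfl⟩ := hv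
  exact ⟨k, rfl⟩

theorem mk_rotate (c : Circuit n a1 a2) (k : ℕ) :
    PeriodicOrbit.mk (c.rotate k) = PeriodicOrbit.mk c :=
  (Quot.sound ⟨k, rfl⟩).symm

/-- Rotating a circuit with constant arcs only moves its start, so any vertex of it determines
its periodic orbit. -/
theorem mk_eq_of_mem_origins_of_arcs_eq_replicate {c₁ c₂ : Circuit n a1 a2} {L a : ℕ}
    {v : ZMod n} (h₁ : c₁.arcs = List.replicate L a) (h₂ : c₂.arcs = List.replicate L a)
    (hv₁ : v ∈ c₁.origins) (hv₂ : v ∈ c₂.origins) :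
    PeriodicOrbit.mk c₁ = PeriodicOrbit.mk c₂ := by
  obtain ⟨k₁, hk₁⟩ := c₁.exists_rotate_start_eq hv₁
  obtain ⟨k₂, hk₂⟩ := c₂.exists_rotate_start_eq hv₂
  have hrot : c₁.rotate k₁ = c₂.rotate k₂ :=
    ext (hk₁.trans hk₂.symm) (by simp only [rotate, h₁, h₂, List.rotate_replicate])
  rw [← c₁.mk_rotate k₁, hrot, c₂.mk_rotate]

theorem IsPrimitive.odd {c : Circuit n a1 a2} (hc : c.IsPrimitive)
    (h : c.arcs = List.replicate n 2) : Odd n := by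
  refine Nat.not_even_iff_odd.1 fun ⟨m, hm⟩ => hc ⟨List.replicate m 2, 2, le_rfl, ?_, ?_⟩
  · rw [List.sum_replicate, smul_eq_mul, show m * 2 = n by omega, ZMod.natCast_self]
  · rw [h, List.flatten_replicate_replicate, hm, two_mul]

theorem dvd_walkSum (c : Circuit n a1 a2) : n ∣ c.walkSum :=
  (ZMod.natCast_eq_zero_iff _ _).1 c.closed

theorem walkSum_le_or_mul_two_le (c : Circuit n a1 a2) : c.walkSum ≤ n ∨ n * 2 ≤ c.walkSum := by
  obtain ⟨k, hk⟩ := c.dvd_walkSum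
  rw [hk]
  rcases Nat.lt_or_ge k 2 with hk2 | hk2
  · exact Or.inl ((Nat.mul_le_mul_left n (by omega : k ≤ 1)).trans_eq (mul_one n))
  · exact Or.inr (Nat.mul_le_mul_left n hk2)

theorem pos_of_mem_arcs (c : Circuit n a1 a2) (h1 : 0 < a1) (h2 : 0 < a2) :
    ∀ a ∈ c.arcs, 0 < a := fun a ha => by rcases c.arcs_mem a ha with rfl | rfl <;> assumption

theorem le_of_mem_arcs (c : Circuit n a1 a2) (h : a1 ≤ a2) : ∀ a ∈ c.arcs, a ≤ a2 :=
  fun a ha => by rcases c.arcs_mem a ha with rfl | rfl <;> simp [h]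

theorem le_walkSum (c : Circuit n a1 a2) (h1 : 0 < a1) (h2 : 0 < a2) : n ≤ c.walkSum :=
  Nat.le_of_dvd (List.sum_pos _ (c.pos_of_mem_arcs h1 h2) c.arcs_ne) c.dvd_walkSum

theorem walkSum_le_len_mul (c : Circuit n a1 a2) (h : a1 ≤ a2) : c.walkSum ≤ c.len * a2 := by
  simpa [walkSum, len] using List.sum_le_card_nsmul c.arcs a2 (c.le_of_mem_arcs h)

theorem arcs_eq_replicate_of_len_mul_le (c : Circuit n a1 a2) (h : a1 ≤ a2)
    (hW : c.len * a2 ≤ c.walkSum) : c.arcs = List.replicate c.len a2 :=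
  List.eq_replicate_of_length_mul_le_sum (c.le_of_mem_arcs h) hW

end Circuit

namespace PeriodicOrbit

variable {n a1 a2 : ℕ}

noncomputable def origins (γ : PeriodicOrbit n a1 a2) : Multiset (ZMod n) := γ.bonds.map Prod.fst

theorem exists_mk_eq_and_origins_eq (γ : PeriodicOrbit n a1 a2) :
    ∃ c : Circuit n a1 a2, mk c = γ ∧ γ.origins = c.origins :=
  ⟨_, (Quot.exists_rep γ).choose_spec, by simp [origins, bonds, Circuit.origins]⟩

theorem len_mk (c : Circuit n a1 a2) : (mk c).len = c.len := rfl

theorem nodup_origins_of_len_le {γ : PeriodicOrbit n 1 2} (hγ : γ.IsPrimitive) (hlen : γ.len ≤ n) :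
    γ.origins.Nodup := by
  obtain ⟨c, rfl, hc⟩ := γ.exists_mk_eq_and_origins_eq
  rw [hc, Multiset.coe_nodup]
  rw [len_mk] at hlen
  rcases c.walkSum_le_or_mul_two_le with hW | hW
  · exact c.nodup_origins_of_walkSum_le (c.pos_of_mem_arcs one_pos two_pos) hW
  have hW' := c.walkSum_le_len_mul one_le_two
  have hc₂ := c.arcs_eq_replicate_of_len_mul_le one_le_two (by omega)
  have hcn : c.len = n := by omega
  obtain ⟨c', hc', hprim⟩ := hγ
  have hc'₂ : c'.arcs = List.replicate n 2 := by
    have hlen' : c'.len = n := (congrArg len hc').trans hcn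
    have hW'' : c'.walkSum = c.walkSum := congrArg walkSum hc'
    have h := c'.arcs_eq_replicate_of_len_mul_le one_le_two (by omega)
    rwa [hlen'] at h
  exact c.nodup_origins_of_arcs_eq_replicate hc₂ (Nat.coprime_two_left.2 (hprim.odd hc'₂)) hlen

theorem disjoint_origins {γ₁ γ₂ : PeriodicOrbit n 1 2} (hne : γ₁ ≠ γ₂)
    (hlen : γ₁.len + γ₂.len ≤ n) : Disjoint γ₁.origins γ₂.origins := by
  obtain ⟨c₁, rfl, h₁⟩ := γ₁.exists_mk_eq_and_origins_eq
  obtain ⟨c₂, rfl, h₂⟩ := γ₂.exists_mk_eq_and_origins_eq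
  rw [len_mk, len_mk] at hlen
  have hW₁ := c₁.le_walkSum one_pos two_pos
  have hW₂ := c₂.le_walkSum one_pos two_pos
  have hW₁' := c₁.walkSum_le_len_mul one_le_two
  have hW₂' := c₂.walkSum_le_len_mul one_le_two
  have hL : c₂.len = c₁.len := by omega
  have e₁ := c₁.arcs_eq_replicate_of_len_mul_le one_le_two (by omega)
  have e₂ := c₂.arcs_eq_replicate_of_len_mul_le one_le_two (by omega)
  rw [hL] at e₂
  rw [h₁, h₂, Multiset.disjoint_left]
  intro v hv₁ hv₂
  exact hne (Circuit.mk_eq_of_mem_origins_of_arcs_eq_replicate e₁ e₂ hv₁ hv₂)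

end PeriodicOrbit

namespace PseudoOrbit

variable {n a1 a2 : ℕ}

theorem origins_eq_bind (ps : PseudoOrbit n a1 a2) :
    ps.origins = ps.bind PeriodicOrbit.origins :=
  Multiset.map_bind _ _ _

theorem len_le_of_mem {ps : PseudoOrbit n a1 a2} {γ : PeriodicOrbit n a1 a2} (h : γ ∈ ps) :
    γ.len ≤ ps.len :=
  Multiset.le_sum_of_mem (Multiset.mem_map_of_mem _ h)

theorem len_add_len_le {ps : PseudoOrbit n a1 a2} (hps : ps.Nodup) {γ₁ γ₂ : PeriodicOrbit n a1 a2}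
    (h₁ : γ₁ ∈ ps) (h₂ : γ₂ ∈ ps) (hne : γ₁ ≠ γ₂) : γ₁.len + γ₂.len ≤ ps.len := by
  have hle : {γ₁, γ₂} ≤ ps :=
    (Multiset.le_iff_subset (by simpa using hne)).2 (by simp [h₁, h₂])
  obtain ⟨t, rfl⟩ := Multiset.le_iff_exists_add.1 hle
  simp [len]

end PseudoOrbit

theorem no_self_intersection_one_two_general
    (n : ℕ)
    (ps : PseudoOrbit n 1 2) (hps : ps.IsPrimitive)
    (hln : ps.len ≤ n) :
    ps.NoSelfIntersection := by
  have hnodup : ps.origins.Nodup := by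
    rw [ps.origins_eq_bind, Multiset.nodup_bind]
    refine ⟨fun γ hγ => PeriodicOrbit.nodup_origins_of_len_le (hps.1 γ hγ)
      ((PseudoOrbit.len_le_of_mem hγ).trans hln), hps.2.pairwise fun γ₁ h₁ γ₂ h₂ hne => ?_⟩
    exact PeriodicOrbit.disjoint_origins hne ((PseudoOrbit.len_add_len_le hps.2 h₁ h₂ hne).trans hln)
  exact Multiset.nodup_iff_count_le_one.1 hnodup

/-- On `C_n^+(1,2)` with `n > 2`, no primitive pseudo orbit of
length `l` with `0 < l ≤ n` has any self-intersection: every vertex appears at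
most once among the origin vertices of the bonds of any such pseudo orbit. -/
theorem no_self_intersection_one_two
    (n : ℕ) (hn : 2 < n)
    (ps : PseudoOrbit n 1 2) (hps : ps.IsPrimitive)
    (hl : 0 < ps.len) (hln : ps.len ≤ n) :
    ps.NoSelfIntersection :=
  no_self_intersection_one_two_general n ps hps hln
end

section
/- Let n > 3 and let G = C_n^+(1,3) be the directed circulant graph on Z/nZ with outgoing arcs 1 and 3 at every vertex. If there exists a primitive pseudo orbit on G of length l with 0 < l ≤ n having exactly N > 0 self-intersections, each a 2-encounter of length zero, and no other self-intersection, then N ≤ (3l − 2n)/4 ≤ l/4 ≤ n/4. -/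
/-!
Let `x v, y v ∈ {0, 1}` count the bonds of arc `1` and of arc `3` leaving `v`. A bond `(w, a)`
passes the `a` vertices `w, …, w + a - 1`, and a closed walk of walk sum `m n` passes every vertex
exactly `m` times, so `x v + y v + y (v - 1) + y (v - 2)` is a constant `M`. Summing over `v` gives
`∑ x + 3 ∑ y = n M`, while `∑ x + ∑ y = l ≤ n`. An encounter vertex has `x v = y v = 1`, which
forces `M = 2` (`M ≥ 3` would need `∑ x = 0`); then `v - 1` carries no bond of arc `3`, hence
a bond of arc `1`, and is not an encounter vertex. So `2 N ≤ ∑ x = (3 l - 2 n) / 2`.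
-/

open Finset

namespace ZMod

variable {n : ℕ} [NeZero n]

theorem count_add_natCast_eq (u v : ZMod n) (b : ℕ) :
    Nat.count (fun t => u + (t : ZMod n) = v) b =
      b / n + if (v - u).val < b % n then 1 else 0 := by
  have hiff : ∀ t : ℕ, u + (t : ZMod n) = v ↔ t ≡ (v - u).val [MOD n] := fun t => by
    rw [← natCast_eq_natCast_iff, natCast_zmod_val, eq_sub_iff_add_eq']
  simp_rw [hiff]
  rw [Nat.count_modEq_card _ (Nat.pos_of_neZero n), Nat.mod_eq_of_lt (val_lt _)]

theorem count_add_natCast_eq_of_le (u v : ZMod n) {b : ℕ} (hb : b ≤ n) :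
    Nat.count (fun t => u + (t : ZMod n) = v) b = if (v - u).val < b then 1 else 0 := by
  rw [count_add_natCast_eq]
  rcases hb.lt_or_eq with hb | rfl
  · rw [Nat.div_eq_of_lt hb, Nat.mod_eq_of_lt hb, zero_add]
  · simp [val_lt, Nat.div_self (Nat.pos_of_neZero b)]

theorem count_add_natCast_eq_mul (u v : ZMod n) (m : ℕ) :
    Nat.count (fun t => u + (t : ZMod n) = v) (n * m) = m := by
  simp [count_add_natCast_eq, Nat.pos_of_neZero n]

end ZMod

theorem map_snd_bondsFrom (n : ℕ) : ∀ (u : ZMod n) (as : List ℕ),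
    (bondsFrom n u as).map Prod.snd = as
  | _, [] => rfl
  | u, a :: as => by rw [bondsFrom, List.map_cons, map_snd_bondsFrom n _ as]

theorem countP_bondsFrom {n : ℕ} [NeZero n] (v : ZMod n) :
    ∀ (u : ZMod n) (as : List ℕ), (∀ a ∈ as, a ≤ n) →
      (bondsFrom n u as).countP (fun b => decide ((v - b.1).val < b.2)) =
        Nat.count (fun t => u + (t : ZMod n) = v) as.sum
  | _, [], _ => by simp [bondsFrom]
  | u, a :: as, h => by
    rw [bondsFrom, List.countP_cons, List.sum_cons, Nat.count_add,
      countP_bondsFrom v (u + a) as fun b hb => h b (List.mem_cons_of_mem _ hb),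
      ZMod.count_add_natCast_eq_of_le u v (h a List.mem_cons_self), add_comm]
    simp [add_assoc]

namespace Circuit

variable {n a1 a2 : ℕ}

theorem passCount_eq_walkSum_div [NeZero n] (h1 : a1 ≤ n) (h2 : a2 ≤ n)
    (c : Circuit n a1 a2) (v : ZMod n) : c.passCount v = c.walkSum / n := by
  obtain ⟨m, hm⟩ := (ZMod.natCast_eq_zero_iff _ n).mp c.closed
  have harcs : ∀ a ∈ c.arcs, a ≤ n := fun a ha =>
    (c.arcs_mem a ha).elim (· ▸ h1) (· ▸ h2)
  rw [passCount, bonds, countP_bondsFrom v c.start c.arcs harcs, walkSum, hm,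
    ZMod.count_add_natCast_eq_mul, Nat.mul_div_cancel_left _ (Nat.pos_of_neZero n)]

end Circuit

namespace PeriodicOrbit

variable {n a1 a2 : ℕ}

theorem exists_rep_bonds_passCount (γ : PeriodicOrbit n a1 a2) :
    ∃ c : Circuit n a1 a2, mk c = γ ∧ γ.bonds = c.bonds ∧ γ.passCount = c.passCount :=
  ⟨_, (Quot.exists_rep γ).choose_spec, rfl, rfl⟩

theorem card_bonds (γ : PeriodicOrbit n a1 a2) : Multiset.card γ.bonds = γ.len := by
  obtain ⟨c, rfl, hb, -⟩ := γ.exists_rep_bonds_passCount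
  rw [hb, Multiset.coe_card, ← List.length_map Prod.snd, Circuit.bonds, map_snd_bondsFrom]
  rfl

theorem arc_of_mem_bonds {γ : PeriodicOrbit n a1 a2} {b : ZMod n × ℕ} (hb : b ∈ γ.bonds) :
    b.2 = a1 ∨ b.2 = a2 := by
  obtain ⟨c, rfl, hγ, -⟩ := γ.exists_rep_bonds_passCount
  rw [hγ, Multiset.mem_coe] at hb
  apply c.arcs_mem
  rw [← map_snd_bondsFrom n c.start c.arcs]
  exact List.mem_map_of_mem hb

theorem countP_bonds (γ : PeriodicOrbit n a1 a2) (v : ZMod n) :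
    γ.bonds.countP (fun b => (v - b.1).val < b.2) = γ.passCount v := by
  obtain ⟨c, -, hb, hp⟩ := γ.exists_rep_bonds_passCount
  rw [hb, hp, Multiset.coe_countP]
  rfl

theorem passCount_eq_walkSum_div [NeZero n] (h1 : a1 ≤ n) (h2 : a2 ≤ n)
    (γ : PeriodicOrbit n a1 a2) (v : ZMod n) : γ.passCount v = γ.walkSum / n := by
  obtain ⟨c, rfl, -, hp⟩ := γ.exists_rep_bonds_passCount
  rw [hp]
  exact c.passCount_eq_walkSum_div h1 h2 v

end PeriodicOrbit

namespace PseudoOrbit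

variable {n a1 a2 : ℕ}

theorem card_bonds (ps : PseudoOrbit n a1 a2) : Multiset.card ps.bonds = ps.len := by
  rw [bonds, ← Multiset.join, Multiset.card_join, Multiset.map_map, len]
  exact congrArg Multiset.sum (Multiset.map_congr rfl fun γ _ => γ.card_bonds)

theorem arc_of_mem_bonds {ps : PseudoOrbit n a1 a2} {b : ZMod n × ℕ} (hb : b ∈ ps.bonds) :
    b.2 = a1 ∨ b.2 = a2 := by
  obtain ⟨_, hγ, hbγ⟩ := Multiset.mem_join.mp hb
  obtain ⟨γ, -, rfl⟩ := Multiset.mem_map.mp hγ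
  exact PeriodicOrbit.arc_of_mem_bonds hbγ

theorem countP_bonds (ps : PseudoOrbit n a1 a2) (v : ZMod n) :
    ps.bonds.countP (fun b => (v - b.1).val < b.2) = ps.passCount v := by
  rw [bonds, ← Multiset.coe_countPAddMonoidHom, map_multiset_sum, Multiset.map_map, passCount]
  exact congrArg Multiset.sum (Multiset.map_congr rfl fun γ _ => γ.countP_bonds v)

theorem passCount_eq_sum_walkSum_div [NeZero n] (h1 : a1 ≤ n) (h2 : a2 ≤ n)
    (ps : PseudoOrbit n a1 a2) (v : ZMod n) :
    ps.passCount v = (ps.map fun γ => γ.walkSum / n).sum :=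
  congrArg Multiset.sum (Multiset.map_congr rfl fun γ _ => γ.passCount_eq_walkSum_div h1 h2 v)

theorem sum_count_origins [NeZero n] (ps : PseudoOrbit n a1 a2) :
    ∑ v, ps.origins.count v = ps.len := by
  rw [← card_bonds, origins, ← Multiset.card_map Prod.fst]
  exact Multiset.sum_count_eq_card (by simp)

theorem twoEncounterCount_eq [NeZero n] {ps : PseudoOrbit n a1 a2} {f : ZMod n → ℕ}
    (hf : ∀ v, ps.origins.count v = f v) : ps.twoEncounterCount = #{v | f v = 2} := by
  rw [twoEncounterCount]
  congr 1
  ext v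
  simp only [mem_filter, Multiset.mem_toFinset, mem_univ, true_and, hf]
  exact ⟨And.right, fun h => ⟨Multiset.count_pos.mp (by rw [hf]; omega), h⟩⟩

end PseudoOrbit

theorem Multiset.countP_eq_sum_count {α : Type*} [DecidableEq α] {p : α → Prop}
    [DecidablePred p] {s : Multiset α} {F : Finset α} (h : ∀ a ∈ s, p a ↔ a ∈ F) :
    s.countP p = ∑ a ∈ F, s.count a := by
  rw [Multiset.countP_congr rfl fun a ha => propext (h a ha), Multiset.countP_eq_card_filter,
    ← Multiset.sum_count_eq_card (s := F) (by simp)]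
  exact Finset.sum_congr rfl fun a ha => Multiset.count_filter_of_pos ha

theorem ZMod.val_lt_three_iff {n : ℕ} (hn : 2 < n) {u : ZMod n} :
    u.val < 3 ↔ u = 0 ∨ u = 1 ∨ u = 2 := by
  have : NeZero n := ⟨by omega⟩
  have hval : ∀ k < 3, ((k : ℕ) : ZMod n).val = k := fun k hk => ZMod.val_cast_of_lt (by omega)
  constructor
  · intro h
    rw [← ZMod.natCast_zmod_val u]
    interval_cases u.val <;> simp
  · rintro (rfl | rfl | rfl)
    · simp
    · exact_mod_cast (hval 1 (by norm_num)).trans_lt (by norm_num)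
    · exact_mod_cast (hval 2 (by norm_num)).trans_lt (by norm_num)

section ArcsOneThree

variable {n : ℕ} {s : Multiset (ZMod n × ℕ)}

theorem count_map_fst_of_arcs_one_three (hs : ∀ b ∈ s, b.2 = 1 ∨ b.2 = 3) (v : ZMod n) :
    (s.map Prod.fst).count v = s.count (v, 1) + s.count (v, 3) := by
  rw [Multiset.count_map, ← Multiset.countP_eq_card_filter,
    Multiset.countP_eq_sum_count (F := {(v, 1), (v, 3)}), Finset.sum_pair (by simp)]
  rintro ⟨w, a⟩ hb
  rcases hs _ hb with rfl | rfl <;> simp [eq_comm]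

theorem countP_passes_of_arcs_one_three (hn : 2 < n) (hs : ∀ b ∈ s, b.2 = 1 ∨ b.2 = 3)
    (v : ZMod n) :
    s.countP (fun b => (v - b.1).val < b.2) =
      s.count (v, 1) + s.count (v, 3) + s.count (v - 1, 3) + s.count (v - 2, 3) := by
  have h1 : (1 : ZMod n) ≠ 0 := fun h => by
    simpa [h] using (ZMod.val_cast_of_lt (by omega) : ((1 : ℕ) : ZMod n).val = 1)
  have h2 : (2 : ZMod n) ≠ 0 := fun h => by
    simpa [h] using (ZMod.val_cast_of_lt hn : ((2 : ℕ) : ZMod n).val = 2)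
  have hv1 : v ≠ v - 1 := fun h => h1 (by linear_combination h)
  have hv2 : v ≠ v - 2 := fun h => h2 (by linear_combination h)
  have h12 : v - 1 ≠ v - 2 := fun h => h1 (by linear_combination h)
  rw [Multiset.countP_eq_sum_count (F := {(v, 1), (v, 3), (v - 1, 3), (v - 2, 3)}),
    Finset.sum_insert (by simp), Finset.sum_insert (by simp [hv1, hv2]),
    Finset.sum_pair (by simp [h12]), ← add_assoc, ← add_assoc]
  rintro ⟨w, a⟩ hb
  rcases hs _ hb with rfl | rfl
  · simp [sub_eq_zero, eq_comm (a := w)]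
  · simp [ZMod.val_lt_three_iff hn, eq_sub_iff_add_eq, sub_eq_iff_eq_add', eq_comm]

end ArcsOneThree

section PassBalance

variable {n : ℕ} [NeZero n] {x y : ZMod n → ℕ} {M : ℕ}

theorem sum_add_three_mul_sum_eq_mul (hM : ∀ v, x v + y v + y (v - 1) + y (v - 2) = M) :
    ∑ v, x v + 3 * ∑ v, y v = n * M := by
  have hshift : ∀ k : ZMod n, ∑ v, y (v - k) = ∑ v, y v := fun k =>
    Fintype.sum_equiv (Equiv.subRight k) _ _ fun _ => rfl
  calc ∑ v, x v + 3 * ∑ v, y v = ∑ v, (x v + y v + y (v - 1) + y (v - 2)) := by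
        simp only [Finset.sum_add_distrib, hshift]; ring
    _ = n * M := by simp [hM, ZMod.card]

theorem eq_two_of_pass_eq (hx : ∀ v, x v ≤ 1) (hy : ∀ v, y v ≤ 1)
    (hM : ∀ v, x v + y v + y (v - 1) + y (v - 2) = M) (hl : ∑ v, x v + ∑ v, y v ≤ n)
    (hT : ∃ v, x v + y v = 2) : M = 2 := by
  obtain ⟨v, hv⟩ := hT
  have hxv : x v ≤ ∑ w, x w := Finset.single_le_sum (fun _ _ => Nat.zero_le _) (mem_univ v)
  have hbalance := sum_add_three_mul_sum_eq_mul hM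
  have := hM v
  have := hx v
  have := hy v
  by_contra hne
  have : n * 3 ≤ n * M := Nat.mul_le_mul_left n (by omega)
  omega

theorem two_mul_card_le_sum (hx : ∀ v, x v ≤ 1) (hy : ∀ v, y v ≤ 1)
    (hM : ∀ v, x v + y v + y (v - 1) + y (v - 2) = 2) :
    2 * #{v | x v + y v = 2} ≤ ∑ v, x v := by
  set T : Finset (ZMod n) := {v | x v + y v = 2}
  have hT : ∀ v ∈ T, x v = 1 ∧ y v = 1 ∧ y (v - 1) = 0 ∧ y (v - 2) = 0 := fun v hv => by
    have := (mem_filter.mp hv).2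
    have := hM v
    have := hx v
    have := hy v
    omega
  have hprev : ∀ v ∈ T, x (v - 1) = 1 := fun v hv => by
    have h := hM (v - 1)
    rw [sub_sub, sub_sub] at h
    norm_num at h
    have := hT v hv
    have := hx (v - 1)
    have := hy (v - 3)
    omega
  have hdisj : Disjoint T (T.image (· - 1)) := by
    refine disjoint_left.mpr fun w hw hw' => ?_
    obtain ⟨v, hv, rfl⟩ := mem_image.mp hw'
    have := (hT _ hw).2.1
    have := (hT v hv).2.2.1
    omega
  have hone : ∀ w ∈ T ∪ T.image (· - 1), x w = 1 := fun w hw => by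
    rcases mem_union.mp hw with hw | hw
    · exact (hT w hw).1
    · obtain ⟨v, hv, rfl⟩ := mem_image.mp hw
      exact hprev v hv
  calc 2 * #T = #(T ∪ T.image (· - 1)) := by
        rw [card_union_of_disjoint hdisj, card_image_of_injective _ sub_left_injective]; ring
    _ = ∑ w ∈ T ∪ T.image (· - 1), x w := by
        rw [sum_congr rfl hone, sum_const, smul_eq_mul, mul_one]
    _ ≤ ∑ w, x w := sum_le_sum_of_subset (subset_univ _)

theorem four_mul_card_add_two_mul_le (hx : ∀ v, x v ≤ 1) (hy : ∀ v, y v ≤ 1)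
    (hM : ∀ v, x v + y v + y (v - 1) + y (v - 2) = M) (hl : ∑ v, x v + ∑ v, y v ≤ n)
    (hT : ∃ v, x v + y v = 2) :
    4 * #{v | x v + y v = 2} + 2 * n ≤ 3 * (∑ v, x v + ∑ v, y v) := by
  obtain rfl := eq_two_of_pass_eq hx hy hM hl hT
  have := sum_add_three_mul_sum_eq_mul hM
  have := two_mul_card_le_sum hx hy hM
  omega

end PassBalance

theorem two_encounter_bound_one_three_general
    (n : ℕ) (hn : 3 < n) (l N : ℕ) (hln : l ≤ n) (hN : 0 < N)
    (ps : PseudoOrbit n 1 3) (hlen : ps.len = l)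
    (henc : ps.OnlyTwoEncounters N) :
    (N : ℚ) ≤ (3 * (l : ℚ) - 2 * (n : ℚ)) / 4 ∧
    (3 * (l : ℚ) - 2 * (n : ℚ)) / 4 ≤ (l : ℚ) / 4 ∧
    (l : ℚ) / 4 ≤ (n : ℚ) / 4 := by
  have : NeZero n := ⟨by omega⟩
  obtain ⟨hnodup, -, rfl⟩ := henc
  have harcs : ∀ b ∈ ps.bonds, b.2 = 1 ∨ b.2 = 3 := fun _ => PseudoOrbit.arc_of_mem_bonds
  have hsimple : ∀ b, ps.bonds.count b ≤ 1 := Multiset.nodup_iff_count_le_one.mp hnodup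
  set x : ZMod n → ℕ := fun v => ps.bonds.count (v, 1)
  set y : ZMod n → ℕ := fun v => ps.bonds.count (v, 3)
  have horigins : ∀ v, ps.origins.count v = x v + y v := count_map_fst_of_arcs_one_three harcs
  have hpass : ∀ v, x v + y v + y (v - 1) + y (v - 2) = ps.passCount 0 := fun v => by
    rw [← countP_passes_of_arcs_one_three (by omega) harcs, PseudoOrbit.countP_bonds,
      PseudoOrbit.passCount_eq_sum_walkSum_div, PseudoOrbit.passCount_eq_sum_walkSum_div] <;> omega
  have hsum : ∑ v, x v + ∑ v, y v = l := by
    simp_rw [← sum_add_distrib, ← horigins, ps.sum_count_origins, hlen]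
  have hcount := PseudoOrbit.twoEncounterCount_eq horigins
  obtain ⟨v, hv⟩ := card_pos.mp (hcount ▸ hN)
  have key := four_mul_card_add_two_mul_le (fun _ => hsimple _) (fun _ => hsimple _) hpass
    (hsum ▸ hln) ⟨v, (mem_filter.mp hv).2⟩
  rw [hsum, ← hcount] at key
  have hq : (4 * ps.twoEncounterCount + 2 * n : ℚ) ≤ 3 * l := by exact_mod_cast key
  have hlnq : (l : ℚ) ≤ n := by exact_mod_cast hln
  exact ⟨by linarith, by linarith, by linarith⟩

/-- For the graph `C_n^+(1,3)` with `n > 3`: if there exists a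
primitive pseudo orbit of length `l` with `0 < l ≤ n` having exactly `N > 0`
self-intersections, each a 2-encounter of length zero, and no other
self-intersection, then `N ≤ (3l − 2n)/4 ≤ l/4 ≤ n/4`. -/
theorem two_encounter_bound_one_three
    (n : ℕ) (hn : 3 < n) (l N : ℕ) (hl : 0 < l) (hln : l ≤ n) (hN : 0 < N)
    (ps : PseudoOrbit n 1 3) (hps : ps.IsPrimitive) (hlen : ps.len = l)
    (henc : ps.OnlyTwoEncounters N) :
    (N : ℚ) ≤ (3 * (l : ℚ) - 2 * (n : ℚ)) / 4 ∧
    (3 * (l : ℚ) - 2 * (n : ℚ)) / 4 ≤ (l : ℚ) / 4 ∧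
    (l : ℚ) / 4 ≤ (n : ℚ) / 4 :=
  two_encounter_bound_one_three_general n hn l N hln hN ps hlen henc
end
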